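/- arXiv:1212.2331 — 2 statements merged into one kernel-verified Lean document; each statement's English description precedes it below -/
import Mathlib

section
/- Let α ∈ (0, π] and let G = A_α = {z ∈ ℝ² \ {0} : the angle between the vector z and the positive x-axis e₁ is less than α/2} be the angular (sector) domain. Then for every x ∈ G and every r ∈ (0,1), the metric ball B_s(x,r) = {y ∈ G : s_G(x,y) < r} is a convex subset of ℝ². -/
/-!
Let `G` be open and convex, `x ∈ G` and `z ∈ ∂G`. Take a hyperplane through `z` with `G` strictly
on one side, and write `y*` for mirror images in it. For `y ∈ G` the segment from `x` to `y*`
crosses the hyperplane, so it leaves `G` at some `w ∈ ∂G`, and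
`|w - x| + |w - y| ≤ |x - y*| = |y - x*|`; hence `|y - x| ≤ s_G(x, y) |y - x*|`. Since `s_G ≤ 1`,
the Apollonius set `{y | |y - x| ≤ t |y - x*|}` with `t = max (s_G(x, y₁)) (s_G(x, y₂))` is
convex, so it contains every convex combination `m` of `y₁` and `y₂`. As `z` and `m` lie on
opposite sides of the hyperplane, `|x - m*| ≤ |z - x| + |z - m|`, and therefore `s_G(x, m) ≤ t`.
A sector of opening at most `π` is open and convex.
-/

open RealInnerProductSpace

/-- The triangular ratio metric `s_G(x,y) = sup_{z ∈ ∂G} |x−y|/(|z−x|+|z−y|)`. -/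
noncomputable def sMetric {n : ℕ} (G : Set (EuclideanSpace ℝ (Fin n)))
    (x y : EuclideanSpace ℝ (Fin n)) : ℝ :=
  ⨆ z ∈ frontier G, dist x y / (dist z x + dist z y)

/-- The metric ball `B_s(x,r) = {y ∈ G : s_G(x,y) < r}`. -/
def sBall {n : ℕ} (G : Set (EuclideanSpace ℝ (Fin n))) (x : EuclideanSpace ℝ (Fin n))
    (r : ℝ) : Set (EuclideanSpace ℝ (Fin n)) :=
  {y ∈ G | sMetric G x y < r}

theorem IsPreconnected.inter_frontier_nonempty {X : Type*} [TopologicalSpace X] {s t : Set X}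
    (hs : IsPreconnected s) (hst : (s ∩ t).Nonempty) (hst' : (s \ t).Nonempty) :
    (s ∩ frontier t).Nonempty := by
  by_contra h
  rw [Set.not_nonempty_iff_eq_empty, ← Set.disjoint_iff_inter_eq_empty] at h
  have hsub : s ⊆ interior t ∪ (closure t)ᶜ := fun w hw => by
    by_cases hwt : w ∈ closure t
    · exact Or.inl (closure_sdiff_frontier t ▸ ⟨hwt, h.notMem_of_mem_left hw⟩)
    · exact Or.inr hwt
  obtain ⟨x, hxs, hxt⟩ := hst
  have hx : x ∈ interior t :=
    closure_sdiff_frontier t ▸ ⟨subset_closure hxt, h.notMem_of_mem_left hxs⟩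
  obtain ⟨p, hps, hpt⟩ := hst'
  exact hpt <| interior_subset <| hs.subset_left_of_subset_union isOpen_interior
    isClosed_closure.isOpen_compl (Set.disjoint_compl_right_iff_subset.2 interior_subset_closure)
    hsub ⟨x, hxs, hx⟩ hps

section InnerProductSpace

variable {E : Type*} [NormedAddCommGroup E] [InnerProductSpace ℝ E]

theorem norm_smul_add_smul_sq {a b : ℝ} (hab : a + b = 1) (x y : E) :
    ‖a • x + b • y‖ ^ 2 = a * ‖x‖ ^ 2 + b * ‖y‖ ^ 2 - a * b * ‖x - y‖ ^ 2 := by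
  rw [norm_add_sq_real, norm_sub_sq_real, norm_smul, norm_smul, real_inner_smul_left,
    real_inner_smul_right, Real.norm_eq_abs, Real.norm_eq_abs, mul_pow, mul_pow, sq_abs, sq_abs]
  obtain rfl := eq_sub_of_add_eq hab
  ring

theorem convex_setOf_dist_le_mul_dist (p q : E) {t : ℝ} (ht0 : 0 ≤ t) (ht1 : t ≤ 1) :
    Convex ℝ {y | dist y p ≤ t * dist y q} := by
  intro y₁ hy₁ y₂ hy₂ a b ha hb hab
  simp only [Set.mem_ofPred_eq, dist_eq_norm] at hy₁ hy₂ ⊢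
  have hsq : ∀ y : E, ‖y - p‖ ≤ t * ‖y - q‖ → ‖y - p‖ ^ 2 ≤ t ^ 2 * ‖y - q‖ ^ 2 := fun y hy => by
    rw [← mul_pow]; exact pow_le_pow_left₀ (norm_nonneg _) hy 2
  have hcomb : ∀ w : E, a • y₁ + b • y₂ - w = a • (y₁ - w) + b • (y₂ - w) := fun w => by
    rw [smul_sub, smul_sub, sub_add_sub_comm, ← add_smul, hab, one_smul]
  have hp := norm_smul_add_smul_sq hab (y₁ - p) (y₂ - p)
  have hq := norm_smul_add_smul_sq hab (y₁ - q) (y₂ - q)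
  rw [← hcomb, sub_sub_sub_cancel_right] at hp hq
  refine pow_le_pow_iff_left₀ (norm_nonneg _) (by positivity) two_ne_zero |>.1 ?_
  rw [mul_pow, hp, hq]
  have ht2 : t ^ 2 ≤ 1 := pow_le_one₀ ht0 ht1
  nlinarith [mul_le_mul_of_nonneg_left (hsq _ hy₁) ha, mul_le_mul_of_nonneg_left (hsq _ hy₂) hb,
    mul_le_mul_of_nonneg_right ht2 (mul_nonneg (mul_nonneg ha hb) (sq_nonneg ‖y₁ - y₂‖))]

/-- Reflection in the hyperplane `⟪·, u⟫ = c` when `‖u‖ = 1`. -/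
noncomputable def hyperplaneReflection (u : E) (c : ℝ) (y : E) : E := y - (2 * (⟪y, u⟫ - c)) • u

variable {u : E} {c : ℝ}

theorem inner_hyperplaneReflection (hu : ‖u‖ = 1) (y : E) :
    ⟪hyperplaneReflection u c y, u⟫ = 2 * c - ⟪y, u⟫ := by
  rw [hyperplaneReflection, inner_sub_left, real_inner_smul_left, real_inner_self_eq_norm_sq, hu]
  ring

theorem norm_sub_hyperplaneReflection_sq (hu : ‖u‖ = 1) (z y : E) :
    ‖z - hyperplaneReflection u c y‖ ^ 2 = ‖z - y‖ ^ 2 + 4 * (⟪y, u⟫ - c) * (⟪z, u⟫ - c) := by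
  rw [hyperplaneReflection, sub_sub_eq_add_sub, add_sub_right_comm, norm_add_sq_real, norm_smul,
    real_inner_smul_right, inner_sub_left, Real.norm_eq_abs, hu, mul_one, sq_abs]
  ring

theorem dist_hyperplaneReflection_comm (hu : ‖u‖ = 1) (x y : E) :
    dist x (hyperplaneReflection u c y) = dist y (hyperplaneReflection u c x) := by
  rw [dist_eq_norm, dist_eq_norm, ← sq_eq_sq₀ (norm_nonneg _) (norm_nonneg _),
    norm_sub_hyperplaneReflection_sq hu, norm_sub_hyperplaneReflection_sq hu, norm_sub_rev]
  ring

theorem dist_hyperplaneReflection_le (hu : ‖u‖ = 1) {y z : E} (hy : ⟪y, u⟫ ≤ c)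
    (hz : c ≤ ⟪z, u⟫) : dist z (hyperplaneReflection u c y) ≤ dist z y := by
  rw [dist_eq_norm, dist_eq_norm, ← sq_le_sq₀ (norm_nonneg _) (norm_nonneg _),
    norm_sub_hyperplaneReflection_sq hu]
  nlinarith

theorem dist_hyperplaneReflection_of_inner_eq (hu : ‖u‖ = 1) {p : E} (hp : ⟪p, u⟫ = c) (y : E) :
    dist p (hyperplaneReflection u c y) = dist p y := by
  rw [dist_eq_norm, dist_eq_norm, ← sq_eq_sq₀ (norm_nonneg _) (norm_nonneg _),
    norm_sub_hyperplaneReflection_sq hu, hp, sub_self, mul_zero, add_zero]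

theorem exists_mem_frontier_dist_add_dist_le (hu : ‖u‖ = 1) {G : Set E}
    (hGu : ∀ w ∈ G, ⟪w, u⟫ < c) {x y : E} (hx : x ∈ G) (hy : y ∈ G) :
    ∃ w ∈ frontier G, dist w x + dist w y ≤ dist x (hyperplaneReflection u c y) := by
  set y' := hyperplaneReflection u c y
  obtain ⟨p, hp, hpu⟩ : ∃ p ∈ segment ℝ x y', ⟪p, u⟫ = c := by
    have hcross : c ∈ Set.Icc ⟪x, u⟫ ⟪y', u⟫ := by
      rw [inner_hyperplaneReflection hu]
      constructor <;> linarith [hGu x hx, hGu y hy]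
    exact (convex_segment x y').isPreconnected.intermediate_value (left_mem_segment ℝ x y')
      (right_mem_segment ℝ x y') (by fun_prop) hcross
  obtain ⟨w, hw, hwG⟩ := (convex_segment x p).isPreconnected.inter_frontier_nonempty
    ⟨x, left_mem_segment ℝ x p, hx⟩ ⟨p, right_mem_segment ℝ x p, fun h => (hGu p h).ne hpu⟩
  refine ⟨w, hwG, ?_⟩
  calc dist w x + dist w y ≤ dist x w + (dist w p + dist p y) := by
        rw [dist_comm w x]; gcongr; exact dist_triangle w p y
    _ = dist x p + dist p y' := by
        rw [← add_assoc, dist_add_dist_of_mem_segment hw,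
          dist_hyperplaneReflection_of_inner_eq hu hpu]
    _ = dist x y' := dist_add_dist_of_mem_segment hp

theorem exists_unit_inner_lt_inner_of_notMem [CompleteSpace E] {G : Set E} (hG : Convex ℝ G)
    (hO : IsOpen G) (hne : G.Nonempty) {z : E} (hz : z ∉ G) :
    ∃ u : E, ‖u‖ = 1 ∧ ∀ w ∈ G, ⟪w, u⟫ < ⟪z, u⟫ := by
  obtain ⟨f, hf⟩ := geometric_hahn_banach_open_point hG hO hz
  set v := (InnerProductSpace.toDual ℝ E).symm f
  have hv : ∀ w, ⟪w, v⟫ = f w := fun w => by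
    rw [real_inner_comm]; exact InnerProductSpace.toDual_symm_apply
  have hv0 : 0 < ‖v‖ := by
    obtain ⟨x, hx⟩ := hne
    refine norm_pos_iff.2 fun h => (hf x hx).ne ?_
    rw [← hv, ← hv, h, inner_zero_right, inner_zero_right]
  refine ⟨‖v‖⁻¹ • v, by rw [norm_smul, norm_inv, norm_norm, inv_mul_cancel₀ hv0.ne'], ?_⟩
  intro w hw
  rw [real_inner_smul_right, real_inner_smul_right, hv, hv]
  exact mul_lt_mul_of_pos_left (hf w hw) (inv_pos.2 hv0)

theorem setOf_angle_lt_eq {e : E} (he : e ≠ 0) {β : ℝ} (hβ0 : 0 ≤ β) (hβ : β ≤ Real.pi) :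
    {z : E | z ≠ 0 ∧ InnerProductGeometry.angle z e < β} =
      {z | ‖z‖ * (‖e‖ * Real.cos β) < ⟪z, e⟫} := by
  ext z
  rcases eq_or_ne z 0 with rfl | hz
  · simp
  rw [Set.mem_ofPred_eq, Set.mem_ofPred_eq, and_iff_right hz,
    ← Real.strictAntiOn_cos.lt_iff_gt ⟨hβ0, hβ⟩
      ⟨InnerProductGeometry.angle_nonneg z e, InnerProductGeometry.angle_le_pi z e⟩,
    InnerProductGeometry.cos_angle, lt_div_iff₀ (by positivity), mul_comm, mul_assoc]

theorem convex_setOf_norm_mul_lt_inner (e : E) {c : ℝ} (hc : 0 ≤ c) :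
    Convex ℝ {z : E | ‖z‖ * c < ⟪z, e⟫} := by
  have hf : ConvexOn ℝ Set.univ fun z : E => ‖z‖ * c - ⟪z, e⟫ :=
    ((convexOn_univ_norm.smul hc).sub ((innerSL ℝ e).toLinearMap.concaveOn convex_univ)).congr
      fun z _ => by simp [mul_comm, real_inner_comm]
  simpa only [sub_neg, Set.mem_univ, true_and] using hf.convex_lt 0

end InnerProductSpace

theorem dist_div_dist_add_dist_le_one {X : Type*} [PseudoMetricSpace X] (x y z : X) :
    dist x y / (dist z x + dist z y) ≤ 1 :=
  div_le_one_of_le₀ (dist_comm z x ▸ dist_triangle x z y) (by positivity)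

section sMetric

variable {n : ℕ} {G : Set (EuclideanSpace ℝ (Fin n))} {x y : EuclideanSpace ℝ (Fin n)}

theorem sMetric_nonneg : 0 ≤ sMetric G x y :=
  Real.iSup_nonneg fun _ => Real.iSup_nonneg fun _ => by positivity

theorem sMetric_le_one : sMetric G x y ≤ 1 :=
  Real.iSup_le (fun _ => Real.iSup_le (fun _ => dist_div_dist_add_dist_le_one _ _ _) zero_le_one)
    zero_le_one

theorem sMetric_le {t : ℝ} (ht : 0 ≤ t)
    (h : ∀ z ∈ frontier G, dist x y / (dist z x + dist z y) ≤ t) : sMetric G x y ≤ t :=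
  Real.iSup_le (fun z => Real.iSup_le (h z) ht) ht

theorem div_le_sMetric {z : EuclideanSpace ℝ (Fin n)} (hz : z ∈ frontier G) :
    dist x y / (dist z x + dist z y) ≤ sMetric G x y := by
  have hb : BddAbove (Set.range fun z : EuclideanSpace ℝ (Fin n) =>
      ⨆ _ : z ∈ frontier G, dist x y / (dist z x + dist z y)) :=
    ⟨1, Set.forall_mem_range.2 fun _ =>
      Real.iSup_le (fun _ => dist_div_dist_add_dist_le_one _ _ _) zero_le_one⟩
  exact (ciSup_pos hz).symm.le.trans (le_ciSup hb z)

theorem dist_le_sMetric_mul {z : EuclideanSpace ℝ (Fin n)} (hz : z ∈ frontier G) :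
    dist x y ≤ sMetric G x y * (dist z x + dist z y) := by
  rcases (add_nonneg dist_nonneg dist_nonneg : 0 ≤ dist z x + dist z y).eq_or_lt with h | h
  · rw [← h, mul_zero]
    exact h ▸ dist_comm z x ▸ dist_triangle x z y
  · exact (div_le_iff₀ h).1 (div_le_sMetric hz)

theorem dist_le_sMetric_mul_dist_hyperplaneReflection {u : EuclideanSpace ℝ (Fin n)} {c : ℝ}
    (hu : ‖u‖ = 1) (hGu : ∀ w ∈ G, ⟪w, u⟫ < c) (hx : x ∈ G) (hy : y ∈ G) :
    dist x y ≤ sMetric G x y * dist y (hyperplaneReflection u c x) := by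
  obtain ⟨w, hw, hle⟩ := exists_mem_frontier_dist_add_dist_le hu hGu hx hy
  calc dist x y ≤ sMetric G x y * (dist w x + dist w y) := dist_le_sMetric_mul hw
    _ ≤ sMetric G x y * dist x (hyperplaneReflection u c y) := by gcongr; exact sMetric_nonneg
    _ = sMetric G x y * dist y (hyperplaneReflection u c x) := by
        rw [dist_hyperplaneReflection_comm hu]

end sMetric

theorem convex_sBall {n : ℕ} {G : Set (EuclideanSpace ℝ (Fin n))} (hG : Convex ℝ G)
    (hO : IsOpen G) {x : EuclideanSpace ℝ (Fin n)} (hx : x ∈ G) (r : ℝ) :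
    Convex ℝ (sBall G x r) := by
  intro y₁ hy₁ y₂ hy₂ a b ha hb hab
  have hm : a • y₁ + b • y₂ ∈ G := hG hy₁.1 hy₂.1 ha hb hab
  set t := max (sMetric G x y₁) (sMetric G x y₂)
  have ht0 : 0 ≤ t := sMetric_nonneg.trans (le_max_left _ _)
  refine ⟨hm, (sMetric_le ht0 fun z hz => ?_).trans_lt (max_lt hy₁.2 hy₂.2)⟩
  obtain ⟨u, hu, hGu⟩ := exists_unit_inner_lt_inner_of_notMem hG hO ⟨x, hx⟩ (hO.frontier_eq ▸ hz).2
  set σ := hyperplaneReflection u ⟪z, u⟫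
  have hball : ∀ y ∈ G, sMetric G x y ≤ t → dist y x ≤ t * dist y (σ x) := fun y hy hyt => by
    rw [dist_comm]
    exact (dist_le_sMetric_mul_dist_hyperplaneReflection hu hGu hx hy).trans (by gcongr)
  have hmx : dist (a • y₁ + b • y₂) x ≤ t * dist (a • y₁ + b • y₂) (σ x) :=
    convex_setOf_dist_le_mul_dist x (σ x) ht0 (max_le sMetric_le_one sMetric_le_one)
      (hball y₁ hy₁.1 (le_max_left _ _)) (hball y₂ hy₂.1 (le_max_right _ _)) ha hb hab
  refine div_le_of_le_mul₀ (by positivity) ht0 ?_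
  calc dist x (a • y₁ + b • y₂) ≤ t * dist x (σ (a • y₁ + b • y₂)) := by
        rwa [dist_comm, dist_hyperplaneReflection_comm hu]
    _ ≤ t * (dist z x + dist z (a • y₁ + b • y₂)) := by
        gcongr
        calc _ ≤ dist x z + dist z (σ (a • y₁ + b • y₂)) := dist_triangle _ _ _
          _ ≤ dist z x + dist z (a • y₁ + b • y₂) := by
              rw [dist_comm x z]
              gcongr
              exact dist_hyperplaneReflection_le hu (hGu _ hm).le le_rfl

theorem sBall_sector_convex_general (α : ℝ) (hα : α ∈ Set.Ioc 0 Real.pi)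
    (x : EuclideanSpace ℝ (Fin 2))
    (hx : x ∈ {z : EuclideanSpace ℝ (Fin 2) | z ≠ 0 ∧
      EuclideanGeometry.angle z 0 (EuclideanSpace.single 0 1) < α / 2})
    (r : ℝ) :
    Convex ℝ (sBall {z : EuclideanSpace ℝ (Fin 2) | z ≠ 0 ∧
      EuclideanGeometry.angle z 0 (EuclideanSpace.single 0 1) < α / 2} x r) := by
  set e : EuclideanSpace ℝ (Fin 2) := EuclideanSpace.single 0 1
  have hsector : {z : EuclideanSpace ℝ (Fin 2) | z ≠ 0 ∧ EuclideanGeometry.angle z 0 e < α / 2} =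
      {z | ‖z‖ * (‖e‖ * Real.cos (α / 2)) < ⟪z, e⟫} := by
    simpa only [EuclideanGeometry.angle, vsub_eq_sub, sub_zero] using
      setOf_angle_lt_eq (by simp [e]) (by linarith [hα.1]) (by linarith [hα.2, Real.pi_pos])
  have hcos : 0 ≤ Real.cos (α / 2) :=
    Real.cos_nonneg_of_mem_Icc ⟨by linarith [hα.1, Real.pi_pos], by linarith [hα.2]⟩
  rw [hsector] at hx ⊢
  exact convex_sBall (convex_setOf_norm_mul_lt_inner e (mul_nonneg (norm_nonneg e) hcos))
    (isOpen_lt (by fun_prop) (by fun_prop)) hx r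

/-- Let α ∈ (0, π] and let G = A_α = {z ∈ ℝ² \ {0} : ∠(z,0,e₁) < α/2} be the angular
(sector) domain. Then for every x ∈ G and every r ∈ (0,1), the metric ball B_s(x,r)
is a convex subset of ℝ². -/
theorem sBall_sector_convex (α : ℝ) (hα : α ∈ Set.Ioc 0 Real.pi)
    (x : EuclideanSpace ℝ (Fin 2))
    (hx : x ∈ {z : EuclideanSpace ℝ (Fin 2) | z ≠ 0 ∧
      EuclideanGeometry.angle z 0 (EuclideanSpace.single 0 1) < α / 2})
    (r : ℝ) (hr : r ∈ Set.Ioo (0:ℝ) 1) :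
    Convex ℝ (sBall {z : EuclideanSpace ℝ (Fin 2) | z ≠ 0 ∧
      EuclideanGeometry.angle z 0 (EuclideanSpace.single 0 1) < α / 2} x r) :=
  sBall_sector_convex_general α hα x hx r
end

section
/- Let n ≥ 1, G = ℍⁿ = {x ∈ ℝⁿ : xₙ > 0}, x ∈ G, and r ∈ (0,1). Then B_j(x, m) ⊆ B_s(x, r) ⊆ B_j(x, M), where m = log(1 + 2r/√(1−r²)) and M = log(1 + 2r/(1−r)). -/
/-- The j-metric `j_G(x,y) = log(1 + |x−y|/min{d_G(x), d_G(y)})`,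
where `d_G(z) = dist(z, ∂G)`. -/
noncomputable def jMetric {n : ℕ} (G : Set (EuclideanSpace ℝ (Fin n)))
    (x y : EuclideanSpace ℝ (Fin n)) : ℝ :=
  Real.log (1 + dist x y /
    min (Metric.infDist x (frontier G)) (Metric.infDist y (frontier G)))

/-- The metric ball `B_j(x,r) = {y ∈ G : j_G(x,y) < r}`. -/
def jBall {n : ℕ} (G : Set (EuclideanSpace ℝ (Fin n))) (x : EuclideanSpace ℝ (Fin n))
    (r : ℝ) : Set (EuclideanSpace ℝ (Fin n)) :=
  {y ∈ G | jMetric G x y < r}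

open Metric

namespace EuclideanSpace

variable {ι : Type*} (i : ι)

lemma abs_sub_apply_le_dist [Fintype ι] (x y : EuclideanSpace ℝ ι) : |x i - y i| ≤ dist x y :=
  Real.dist_eq (x i) (y i) ▸ PiLp.dist_apply_le x y i

lemma exists_coord_eq_zero_dist_add_dist_eq [Fintype ι] {x y : EuclideanSpace ℝ ι}
    (hx : 0 ≤ x i) (hy : y i ≤ 0) :
    ∃ z : EuclideanSpace ℝ ι, z i = 0 ∧ dist x z + dist z y = dist x y := by
  set s := x i / (x i - y i)
  refine ⟨AffineMap.lineMap x y s, ?_, dist_add_dist_of_mem_segment <| lineMap_mem_segment ℝ x y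
    ⟨div_nonneg hx (by linarith), div_le_one_of_le₀ (by linarith) (by linarith)⟩⟩
  have hs : s * (x i - y i) = x i := div_mul_cancel_of_imp fun h => by linarith
  simp only [AffineMap.lineMap_apply_module, PiLp.add_apply, PiLp.smul_apply, smul_eq_mul]
  linarith

variable [DecidableEq ι]

noncomputable def reflectCoord (y : EuclideanSpace ℝ ι) : EuclideanSpace ℝ ι :=
  y - single i (2 * y i)

@[simp]
lemma reflectCoord_apply_self (y : EuclideanSpace ℝ ι) : reflectCoord i y i = -y i := by
  simp only [reflectCoord, PiLp.sub_apply, PiLp.single_eq_same]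
  ring

variable [Fintype ι]

lemma frontier_setOf_coord_pos :
    frontier {w : EuclideanSpace ℝ ι | 0 < w i} = {w | w i = 0} := by
  have hsurj : Function.Surjective (proj (𝕜 := ℝ) i) :=
    fun a => ⟨single i a, by simp⟩
  have h := (proj (𝕜 := ℝ) i).frontier_preimage hsurj (Set.Ioi 0)
  rwa [frontier_Ioi] at h

lemma infDist_setOf_coord_eq_zero (y : EuclideanSpace ℝ ι) :
    infDist y {w | w i = 0} = |y i| := by
  apply le_antisymm
  · refine (infDist_le_dist_of_mem (y := y - single i (y i)) (by simp)).trans_eq ?_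
    simp
  · refine (le_infDist ⟨0, by simp⟩).2 fun z hz => ?_
    simpa [show z i = 0 from hz] using abs_sub_apply_le_dist i y z

lemma dist_reflectCoord_sq (x y : EuclideanSpace ℝ ι) :
    dist x (reflectCoord i y) ^ 2 = dist x y ^ 2 + 4 * x i * y i := by
  have h : x - reflectCoord i y = (x - y) + single i (2 * y i) := by
    simp only [reflectCoord]; abel
  rw [dist_eq_norm, dist_eq_norm, h, norm_add_sq_real, inner_single_right]
  simp only [PiLp.sub_apply, Real.ringHom_apply, PiLp.norm_single, norm_mul, Real.norm_ofNat,
    Real.norm_eq_abs, mul_pow, sq_abs]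
  ring

lemma dist_reflectCoord_of_coord_eq_zero {z : EuclideanSpace ℝ ι} (hz : z i = 0)
    (y : EuclideanSpace ℝ ι) : dist z (reflectCoord i y) = dist z y := by
  have h := dist_reflectCoord_sq i z y
  rw [hz, mul_zero, zero_mul, add_zero] at h
  exact (sq_eq_sq₀ dist_nonneg dist_nonneg).1 h

end EuclideanSpace

section HalfSpace

open EuclideanSpace

variable {n : ℕ} (i : Fin n) {x y : EuclideanSpace ℝ (Fin n)}

lemma sMetric_halfSpace (hx : 0 < x i) (hy : 0 < y i) :
    sMetric {w : EuclideanSpace ℝ (Fin n) | 0 < w i} x y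
      = dist x y / √(dist x y ^ 2 + 4 * x i * y i) := by
  rw [← dist_reflectCoord_sq, Real.sqrt_sq dist_nonneg]
  have hD : 0 < dist x (reflectCoord i y) := by
    refine dist_nonneg.lt_of_ne' fun h => ?_
    have := dist_reflectCoord_sq i x y
    rw [h] at this
    nlinarith [mul_pos hx hy, sq_nonneg (dist x y)]
  have hbound : ∀ z : EuclideanSpace ℝ (Fin n), z i = 0 →
      dist x y / (dist z x + dist z y) ≤ dist x y / dist x (reflectCoord i y) := fun z hz =>
    div_le_div_of_nonneg_left dist_nonneg hD <| by
      rw [← dist_reflectCoord_of_coord_eq_zero i hz y, dist_comm z x]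
      exact dist_triangle _ _ _
  obtain ⟨z₀, hz₀, hsum⟩ := exists_coord_eq_zero_dist_add_dist_eq i hx.le
    (by rw [reflectCoord_apply_self]; linarith)
  have hz₀_term :
      dist x y / (dist z₀ x + dist z₀ y) = dist x y / dist x (reflectCoord i y) := by
    rw [← dist_reflectCoord_of_coord_eq_zero i hz₀ y, dist_comm z₀ x, hsum]
  have hnonneg : 0 ≤ dist x y / dist x (reflectCoord i y) := by positivity
  rw [sMetric, frontier_setOf_coord_pos]
  refine le_antisymm (Real.iSup_le (fun z => Real.iSup_le (hbound z) hnonneg) hnonneg) ?_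
  refine le_ciSup_of_le ⟨_, Set.forall_mem_range.2 fun z =>
    Real.iSup_le (hbound z) hnonneg⟩ z₀ ?_
  rw [ciSup_pos (show z₀ ∈ {w : EuclideanSpace ℝ (Fin n) | w i = 0} from hz₀), hz₀_term]

lemma jMetric_halfSpace (hx : 0 ≤ x i) (hy : 0 ≤ y i) :
    jMetric {w : EuclideanSpace ℝ (Fin n) | 0 < w i} x y
      = Real.log (1 + dist x y / min (x i) (y i)) := by
  rw [jMetric, frontier_setOf_coord_pos, infDist_setOf_coord_eq_zero,
    infDist_setOf_coord_eq_zero, abs_of_nonneg hx, abs_of_nonneg hy]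

end HalfSpace

lemma div_sqrt_lt_iff {t S r : ℝ} (ht : 0 ≤ t) (hS : 0 < S) (hr : 0 ≤ r) :
    t / √S < r ↔ t ^ 2 < r ^ 2 * S := by
  rw [div_lt_iff₀ (Real.sqrt_pos.2 hS), ← Real.lt_sqrt ht, Real.sqrt_mul' _ hS.le,
    Real.sqrt_sq hr]

lemma mul_eq_min_mul_min_add_abs_sub (a b : ℝ) : a * b = min a b * (min a b + |a - b|) := by
  rw [← min_mul_max, ← max_sub_min_eq_abs']
  ring

lemma div_sqrt_lt_of_div_min_lt {a b t r : ℝ} (ha : 0 < a) (hb : 0 < b) (ht : 0 ≤ t)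
    (hr0 : 0 < r) (hr1 : r < 1) (h : t / min a b < 2 * r / √(1 - r ^ 2)) :
    t / √(t ^ 2 + 4 * a * b) < r := by
  set m := min a b
  have hm : 0 < m := lt_min ha hb
  have hq : 0 < √(1 - r ^ 2) := Real.sqrt_pos.2 (by nlinarith)
  have htq : t * √(1 - r ^ 2) < 2 * r * m := by rwa [div_lt_div_iff₀ hm hq] at h
  have hm2 : m * m ≤ a * b := mul_le_mul (min_le_left a b) (min_le_right a b) hm.le ha.le
  rw [div_sqrt_lt_iff ht (by positivity) hr0.le]
  have : t ^ 2 * (1 - r ^ 2) < 4 * r ^ 2 * (a * b) :=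
    calc t ^ 2 * (1 - r ^ 2) = (t * √(1 - r ^ 2)) ^ 2 := by
          rw [mul_pow, Real.sq_sqrt (by nlinarith)]
      _ < (2 * r * m) ^ 2 := pow_lt_pow_left₀ htq (by positivity) two_ne_zero
      _ ≤ 4 * r ^ 2 * (a * b) := by nlinarith
  linarith

lemma div_min_lt_of_div_sqrt_lt {a b t r : ℝ} (ha : 0 < a) (hb : 0 < b) (hab : |a - b| ≤ t)
    (hr0 : 0 < r) (hr1 : r < 1) (h : t / √(t ^ 2 + 4 * a * b) < r) :
    t / min a b < 2 * r / (1 - r) := by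
  set m := min a b
  have hm : 0 < m := lt_min ha hb
  have ht : 0 ≤ t := (abs_nonneg _).trans hab
  rw [div_sqrt_lt_iff ht (by positivity) hr0.le] at h
  rw [div_lt_div_iff₀ hm (by linarith)]
  by_contra! hle
  have : t ^ 2 * (1 - r ^ 2) ≥ 4 * r ^ 2 * (a * b) :=
    calc t ^ 2 * (1 - r ^ 2) = t * (1 - r) * (t * (1 - r) + 2 * r * t) := by ring
      _ ≥ 2 * r * m * (2 * r * m + 2 * r * t) := by gcongr
      _ = 4 * r ^ 2 * (m * (m + t)) := by ring
      _ ≥ 4 * r ^ 2 * (a * b) := by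
        rw [mul_eq_min_mul_min_add_abs_sub a b]
        gcongr
  linarith

theorem jBall_subset_sBall_subset_jBall_halfSpace_general (n : ℕ) (i : Fin n)
    (x : EuclideanSpace ℝ (Fin n)) (hx : 0 < x i)
    (r : ℝ) (hr : r ∈ Set.Ioo (0:ℝ) 1) :
    jBall {w : EuclideanSpace ℝ (Fin n) | 0 < w i} x
        (Real.log (1 + 2 * r / Real.sqrt (1 - r^2))) ⊆
      sBall {w : EuclideanSpace ℝ (Fin n) | 0 < w i} x r ∧
    sBall {w : EuclideanSpace ℝ (Fin n) | 0 < w i} x r ⊆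
      jBall {w : EuclideanSpace ℝ (Fin n) | 0 < w i} x
        (Real.log (1 + 2 * r / (1 - r))) := by
  obtain ⟨hr0, hr1⟩ := hr
  have hq : 0 < √(1 - r ^ 2) := Real.sqrt_pos.2 (by nlinarith)
  constructor
  · rintro y ⟨hy : 0 < y i, hj⟩
    rw [jMetric_halfSpace i hx.le hy.le,
      Real.log_lt_log_iff (by positivity) (by positivity)] at hj
    refine ⟨hy, ?_⟩
    rw [sMetric_halfSpace i hx hy]
    exact div_sqrt_lt_of_div_min_lt hx hy dist_nonneg hr0 hr1 (by linarith)
  · rintro y ⟨hy : 0 < y i, hs⟩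
    rw [sMetric_halfSpace i hx hy] at hs
    refine ⟨hy, ?_⟩
    rw [jMetric_halfSpace i hx.le hy.le,
      Real.log_lt_log_iff (by positivity) (by have := sub_pos.2 hr1; positivity)]
    linarith [div_min_lt_of_div_sqrt_lt hx hy
      (EuclideanSpace.abs_sub_apply_le_dist i x y) hr0 hr1 hs]

/-- Let n ≥ 1, G = ℍⁿ = {x ∈ ℝⁿ : xₙ > 0}, x ∈ G, and r ∈ (0,1). Then
B_j(x, m) ⊆ B_s(x, r) ⊆ B_j(x, M), where m = log(1 + 2r/√(1−r²)) and
M = log(1 + 2r/(1−r)). -/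
theorem jBall_subset_sBall_subset_jBall_halfSpace (n : ℕ) (hn : 1 ≤ n) (i : Fin n)
    (hi : (i : ℕ) = n - 1) (x : EuclideanSpace ℝ (Fin n)) (hx : 0 < x i)
    (r : ℝ) (hr : r ∈ Set.Ioo (0:ℝ) 1) :
    jBall {w : EuclideanSpace ℝ (Fin n) | 0 < w i} x
        (Real.log (1 + 2 * r / Real.sqrt (1 - r^2))) ⊆
      sBall {w : EuclideanSpace ℝ (Fin n) | 0 < w i} x r ∧
    sBall {w : EuclideanSpace ℝ (Fin n) | 0 < w i} x r ⊆
      jBall {w : EuclideanSpace ℝ (Fin n) | 0 < w i} x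
        (Real.log (1 + 2 * r / (1 - r))) :=
  jBall_subset_sBall_subset_jBall_halfSpace_general n i x hx r hr
end
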